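/- Theorem (minimal entropy extension): Let P be block probabilities of a shift-invariant probability measure on {0,1}^ℤ. For each block a of length n−1, define P̂(0a0) = x̂ₐ, P̂(0a1) = P(0a) − x̂ₐ, P̂(1a0) = P(a0) − x̂ₐ, P̂(1a1) = P(a1) − (P(0a) − x̂ₐ), where x̂ₐ = max{0, P(0a) − P(a1)} if |P(a1) − P(0a)| < |P(a0) − P(0a)| and x̂ₐ = min{P(0a), P(a0)} otherwise. Then −Σ_{b ∈ {0,1}^{n+1}} P̂(b) log P̂(b) ≤ −Σ_{b ∈ {0,1}^{n+1}} P(b) log P(b). -/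

import Mathlib

/-- `Υ(α, β, δ)` from the minimal entropy extension. -/
noncomputable def Ups (α β δ : ℝ) : ℝ :=
  if |δ - α| < |β - α| then max 0 (α - δ) else min α β

/-- `Υ_{c,d}(α, β, δ)`: the four extended block probabilities.
Here `false` plays the role of the symbol `0` and `true` of `1`. -/
noncomputable def UpsE (c d : Bool) (α β δ : ℝ) : ℝ :=
  match c, d with
  | false, false => Ups α β δ
  | false, true  => α - Ups α β δ
  | true,  false => β - Ups α β δ
  | true,  true  => δ - α + Ups α β δ

/-!
Fix a block `a` and write `α = P(0a)`, `β = P(a0)`, `δ = P(a1)`. By consistency the four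
extensions `P(c a d)` are `x, α - x, β - x, δ - α + x` with `x = P(0a0)`, and `P̂` has the same
shape with `x = Ups α β δ`. The entropy of such a table is concave in `x`, so over the interval
of `x` for which all four entries are nonnegative it is minimal at an endpoint. At either
endpoint one entry vanishes, and comparing the two endpoints reduces to the fact that, for a
concave function, a pair of arguments with a fixed sum has the smaller value the further apart
it is. In each sign case of `δ - α` and `β - α` this comparison is decided by the test
`|δ - α| < |β - α|` in `Ups`.
-/

open Set

/-- The sum of `φ` over the entries of the 2 × 2 table with top-left entry `x`, first row sum `α`
and column sums `β`, `δ`. -/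
noncomputable def tableSum (φ : ℝ → ℝ) (α β δ x : ℝ) : ℝ :=
  φ x + φ (α - x) + φ (β - x) + φ (δ - α + x)

lemma ConcaveOn.comp_const_sub {φ : ℝ → ℝ} {s : Set ℝ} (hφ : ConcaveOn ℝ s φ) (c : ℝ) :
    ConcaveOn ℝ {x | c - x ∈ s} (fun x => φ (c - x)) :=
  hφ.comp_affineMap (AffineMap.const ℝ ℝ c - AffineMap.id ℝ ℝ)

lemma ConcaveOn.add_le_add_of_mem_Icc {φ : ℝ → ℝ} {s : Set ℝ} (hφ : ConcaveOn ℝ s φ)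
    {a b t u : ℝ} (ha : a ∈ s) (hb : b ∈ s) (ht : t ∈ Icc a b) (htu : a + b = t + u) :
    φ a + φ b ≤ φ t + φ u := by
  rw [← segment_eq_Icc (ht.1.trans ht.2)] at ht
  obtain ⟨p, q, hp, hq, hpq, rfl⟩ := ht
  obtain rfl : u = q • a + p • b := by
    simp only [smul_eq_mul] at htu ⊢
    linear_combination -htu - (a + b) * hpq
  have h₁ := hφ.2 ha hb hp hq hpq
  have h₂ := hφ.2 ha hb hq hp (by linarith)
  simp only [smul_eq_mul] at h₁ h₂ ⊢
  linear_combination h₁ + h₂ - (φ a + φ b) * hpq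

lemma concaveOn_tableSum {φ : ℝ → ℝ} (hφ : ConcaveOn ℝ (Ici 0) φ) (α β δ : ℝ) :
    ConcaveOn ℝ (Icc (max 0 (α - δ)) (min α β)) (tableSum φ α β δ) := by
  have hI : Convex ℝ (Icc (max 0 (α - δ)) (min α β)) := convex_Icc _ _
  refine (((hφ.subset ?_ hI).add ((hφ.comp_const_sub α).subset ?_ hI)).add
    ((hφ.comp_const_sub β).subset ?_ hI)).add ((hφ.translate_right (δ - α)).subset ?_ hI) <;>
  · intro x ⟨hL, hU⟩
    simp only [max_le_iff, le_min_iff] at hL hU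
    simp only [mem_ofPred_eq, mem_preimage, mem_Ici]
    linarith

lemma tableSum_swap (φ : ℝ → ℝ) (α β δ x : ℝ) :
    tableSum φ α β δ x = tableSum φ α δ β (α - x) := by
  rw [tableSum, tableSum, sub_sub_cancel, sub_add_sub_cancel, ← sub_add]
  ring

lemma tableSum_max_le_min {φ : ℝ → ℝ} (hφ : ConcaveOn ℝ (Ici 0) φ) {α β δ : ℝ}
    (hα : 0 ≤ α) (hβ : 0 ≤ β) (hδ : 0 ≤ δ) (hαβδ : α ≤ β + δ) (h : |δ - α| ≤ |β - α|) :
    tableSum φ α β δ (max 0 (α - δ)) ≤ tableSum φ α β δ (min α β) := by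
  have spread := @hφ.add_le_add_of_mem_Icc
  simp only [mem_Ici, mem_Icc] at spread
  rcases le_total α δ with hαδ | hδα <;> rcases le_total α β with hαβ | hβα
  · rw [max_eq_left (by linarith), min_eq_left hαβ]
    rw [abs_of_nonneg (by linarith), abs_of_nonneg (by linarith)] at h
    have := spread (a := δ - α) (b := β) (t := δ) (u := β - α)
      (by linarith) hβ ⟨by linarith, by linarith⟩ (by ring)
    simp only [tableSum, sub_zero, add_zero, sub_self, sub_add_cancel]
    linarith
  · rw [max_eq_left (by linarith), min_eq_right hβα]
    rw [abs_of_nonneg (by linarith), abs_of_nonpos (by linarith)] at h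
    have := spread (a := δ - α) (b := α) (t := α - β) (u := δ - α + β)
      (by linarith) hα ⟨by linarith, by linarith⟩ (by ring)
    simp only [tableSum, sub_zero, add_zero, sub_self]
    linarith
  · rw [max_eq_right (by linarith), min_eq_left hαβ]
    rw [abs_of_nonpos (by linarith), abs_of_nonneg (by linarith)] at h
    have := spread (a := α - δ) (b := β - α + δ) (t := α) (u := β - α)
      (by linarith) (by linarith) ⟨by linarith, by linarith⟩ (by ring)
    simp only [tableSum, sub_sub_cancel, sub_add_sub_cancel, sub_self, sub_add_cancel, ← sub_add]
    linarith
  · rw [max_eq_right (by linarith), min_eq_right hβα]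
    rw [abs_of_nonpos (by linarith), abs_of_nonpos (by linarith)] at h
    have := spread (a := α - δ) (b := δ) (t := β) (u := α - β)
      (by linarith) hδ ⟨by linarith, by linarith⟩ (by ring)
    simp only [tableSum, sub_sub_cancel, sub_add_sub_cancel, sub_self, ← sub_add]
    rw [show β - α + δ = δ - α + β by ring]
    linarith

lemma tableSum_Ups_le {φ : ℝ → ℝ} (hφ : ConcaveOn ℝ (Ici 0) φ) {α β δ x : ℝ}
    (h₀₀ : 0 ≤ x) (h₀₁ : 0 ≤ α - x) (h₁₀ : 0 ≤ β - x) (h₁₁ : 0 ≤ δ - α + x) :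
    tableSum φ α β δ (Ups α β δ) ≤ tableSum φ α β δ x := by
  have hLU : max 0 (α - δ) ≤ min α β := by
    simp only [max_le_iff, le_min_iff]
    refine ⟨⟨?_, ?_⟩, ?_, ?_⟩ <;> linarith
  have hmin := (concaveOn_tableSum hφ α β δ).min_le_of_mem_Icc (left_mem_Icc.2 hLU)
    (right_mem_Icc.2 hLU) ⟨max_le h₀₀ (by linarith), le_min (by linarith) (by linarith)⟩
  rw [Ups]
  split_ifs with hc
  · rwa [min_eq_left (tableSum_max_le_min hφ (by linarith) (by linarith) (by linarith)
      (by linarith) hc.le)] at hmin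
  · have hUL := tableSum_max_le_min hφ (α := α) (β := δ) (δ := β) (by linarith) (by linarith)
      (by linarith) (by linarith) (not_lt.1 hc)
    rw [tableSum_swap, tableSum_swap φ α δ β, ← min_sub_sub_left, ← max_sub_sub_left, sub_zero,
      sub_sub_cancel, sub_self] at hUL
    rwa [min_eq_right hUL] at hmin

lemma extension_probabilities {P : List Bool → ℝ}
    (hright : ∀ b, P b = P (b ++ [false]) + P (b ++ [true]))
    (hleft : ∀ b, P b = P (false :: b) + P (true :: b)) (A : List Bool) :
    P (false :: A ++ [true]) = P (false :: A) - P (false :: A ++ [false]) ∧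
      P (true :: A ++ [false]) = P (A ++ [false]) - P (false :: A ++ [false]) ∧
      P (true :: A ++ [true]) = P (A ++ [true]) - P (false :: A) + P (false :: A ++ [false]) := by
  have h₀ := hright (false :: A)
  have h₁ := hleft (A ++ [false])
  have h₂ := hleft (A ++ [true])
  simp only [← List.cons_append] at h₀ h₁ h₂
  refine ⟨?_, ?_, ?_⟩ <;> linarith

theorem stmt12_general
    (n : ℕ)
    (P : List Bool → ℝ)
    (hnonneg : ∀ b, 0 ≤ P b)
    (hright : ∀ b, P b = P (b ++ [false]) + P (b ++ [true]))
    (hleft : ∀ b, P b = P (false :: b) + P (true :: b)) :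
    (∑ x : Bool × (Fin (n - 1) → Bool) × Bool,
        -(UpsE x.1 x.2.2
            (P (false :: List.ofFn x.2.1))
            (P (List.ofFn x.2.1 ++ [false]))
            (P (List.ofFn x.2.1 ++ [true])) *
          Real.log (UpsE x.1 x.2.2
            (P (false :: List.ofFn x.2.1))
            (P (List.ofFn x.2.1 ++ [false]))
            (P (List.ofFn x.2.1 ++ [true])))))
      ≤ ∑ x : Bool × (Fin (n - 1) → Bool) × Bool,
          -(P (x.1 :: List.ofFn x.2.1 ++ [x.2.2]) *
            Real.log (P (x.1 :: List.ofFn x.2.1 ++ [x.2.2]))) := by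
  simp only [Fintype.sum_prod_type]
  rw [Finset.sum_comm]
  conv_rhs => rw [Finset.sum_comm]
  refine Finset.sum_le_sum fun a _ => ?_
  obtain ⟨h₀₁, h₁₀, h₁₁⟩ := extension_probabilities hright hleft (List.ofFn a)
  have key := tableSum_Ups_le Real.concaveOn_negMulLog (hnonneg _)
    (h₀₁ ▸ hnonneg _) (h₁₀ ▸ hnonneg _) (h₁₁ ▸ hnonneg _)
  simp only [Fintype.sum_bool, UpsE, h₀₁, h₁₀, h₁₁, ← neg_mul, ← Real.negMulLog.eq_1]
  simp only [tableSum] at key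
  linarith

/-- minimal entropy extension theorem: for block probabilities `P`
of a shift-invariant measure on `{0,1}^ℤ`, defining for each block `a` of
length `n−1` the probabilities `P̂(c a d) = Υ_{c,d}(P(0a), P(a0), P(a1))`
(which is exactly `P̂(0a0) = x̂ₐ`, `P̂(0a1) = P(0a) − x̂ₐ`, `P̂(1a0) = P(a0) − x̂ₐ`,
`P̂(1a1) = P(a1) − (P(0a) − x̂ₐ)` with `x̂ₐ` from eq. (7) of the paper), the
entropy of the extended `(n+1)`-block probabilities does not exceed that of the
true ones. (`Real.log 0 = 0`, so `0 log 0 = 0` automatically.) -/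
theorem stmt12
    (n : ℕ) (hn : 1 ≤ n)
    (P : List Bool → ℝ)
    (hnonneg : ∀ b, 0 ≤ P b)
    (hone : P [false] + P [true] = 1)
    (hright : ∀ b, P b = P (b ++ [false]) + P (b ++ [true]))
    (hleft : ∀ b, P b = P (false :: b) + P (true :: b)) :
    (∑ x : Bool × (Fin (n - 1) → Bool) × Bool,
        -(UpsE x.1 x.2.2
            (P (false :: List.ofFn x.2.1))
            (P (List.ofFn x.2.1 ++ [false]))
            (P (List.ofFn x.2.1 ++ [true])) *
          Real.log (UpsE x.1 x.2.2
            (P (false :: List.ofFn x.2.1))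
            (P (List.ofFn x.2.1 ++ [false]))
            (P (List.ofFn x.2.1 ++ [true])))))
      ≤ ∑ x : Bool × (Fin (n - 1) → Bool) × Bool,
          -(P (x.1 :: List.ofFn x.2.1 ++ [x.2.2]) *
            Real.log (P (x.1 :: List.ofFn x.2.1 ++ [x.2.2]))) :=
  stmt12_general n P hnonneg hright hleft
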